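/- Let ν ≥ 2 be an integer, let φ ∈ L²(ℝ) vanish almost everywhere outside [−ν+1, ν], let j ∈ ℕ satisfy M := 2^j ≥ 2ν, and let ξ ∈ ℂ^M. Then for every n ∈ ℕ: Σ_{m=ν}^{M−ν−1} (∫₀¹ φ_{j,m}(x) w_n(x) dx) ξ_m = 2^{−j/2} Σ_{l=−ν+1}^{ν−1} (∫₀¹ φ(x+l) w_{⌊n/2^j⌋}(x) dx) · Σ_{m=ν}^{M−ν−1} w_n((l+m)/2^j) ξ_m, where φ_{j,m}(x) := 2^{j/2} φ(2^j x − m). -/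

import Mathlib

open MeasureTheory

/-- `natDigit n i` is the `i`-th binary digit `n^(i)` (for `i ≥ 1`) of `n ∈ ℕ`,
so that `n = Σ_{i ≥ 1} n^(i) 2^(i-1)`. -/
def natDigit (n i : ℕ) : ℕ := (n / 2 ^ (i - 1)) % 2

/-- `dyadicDigit x i` is the `i`-th dyadic digit `x^(i) = ⌊2^i x⌋ − 2⌊2^(i−1) x⌋`
(for `i ≥ 1`) of `x ∈ [0,1)`. -/
noncomputable def dyadicDigit (x : ℝ) (i : ℕ) : ℤ :=
  ⌊(2 : ℝ) ^ i * x⌋ - 2 * ⌊(2 : ℝ) ^ (i - 1) * x⌋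

/-- The sequency-ordered Walsh function
`w_n(x) = (−1)^{Σ_{i≥1} (n^(i) + n^(i+1)) x^(i)}`; the sum is finite since
`n^(i) = 0` for `i > n`, so it may be truncated at `i = n + 1`. -/
noncomputable def walsh (n : ℕ) (x : ℝ) : ℝ :=
  (-1 : ℝ) ^ ∑ i ∈ Finset.Icc 1 (n + 1),
    (natDigit n i + natDigit n (i + 1)) * (dyadicDigit x i).toNat

/-- The dyadic XOR `x ⊕ y := Σ_{i≥1} |x^(i) − y^(i)| 2^{−i}` of `x, y ∈ [0,1)`. -/
noncomputable def dyadicXor (x y : ℝ) : ℝ :=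
  ∑' i : ℕ, |(dyadicDigit x (i + 1) : ℝ) - (dyadicDigit y (i + 1) : ℝ)| / 2 ^ (i + 1)

/-!
Split `[0, 1]` into the dyadic intervals `[k / 2^j, (k + 1) / 2^j]`, `k < 2^j`. For `x = (t + k) / 2^j`
with `t ∈ [0, 1)`, the first `j` dyadic digits of `x` are those of `k / 2^j` and the later ones are
those of `t`, while the binary digits of `n` beyond the `j`-th are those of `⌊n / 2^j⌋`; hence
`w_n((t + k) / 2^j) = w_n(k / 2^j) w_{⌊n/2^j⌋}(t)`. Substituting `t = 2^j x - k`, the `k`-th interval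
contributes `2^{-j} w_n(k / 2^j) ∫₀¹ φ(t + k - m) w_{⌊n/2^j⌋}(t) dt`, which vanishes unless
`|k - m| < ν` by the support condition on `φ`; reindexing by `l = k - m` and summing against `ξ`
gives the identity.
-/

open Finset

lemma natDigit_eq_zero_of_add_two_le {n i : ℕ} (h : n + 2 ≤ i) : natDigit n i = 0 := by
  unfold natDigit
  rw [Nat.div_eq_of_lt (Nat.lt_two_pow_self.trans_le (Nat.pow_le_pow_right two_pos (by omega)))]

lemma natDigit_add {i : ℕ} (n j : ℕ) (hi : 1 ≤ i) :
    natDigit n (i + j) = natDigit (n / 2 ^ j) i := by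
  unfold natDigit
  rw [Nat.div_div_eq_div_mul, ← pow_add, show i + j - 1 = j + (i - 1) by omega]

lemma floor_two_pow_mul_div_two_pow {r j : ℕ} (hrj : r ≤ j) (y : ℝ) :
    ⌊(2 : ℝ) ^ r * (y / 2 ^ j)⌋ = ⌊y⌋ / 2 ^ (j - r) := by
  have h : (2 : ℝ) ^ r * (y / 2 ^ j) = y / ((2 ^ (j - r) : ℕ) : ℝ) := by
    rw [Nat.cast_pow, Nat.cast_ofNat, ← Nat.sub_add_cancel hrj, pow_add, Nat.add_sub_cancel]
    field_simp
  rw [h, Int.floor_div_natCast, Nat.cast_pow, Nat.cast_ofNat]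

lemma dyadicDigit_div_two_pow_of_le {i j : ℕ} (hij : i ≤ j) (y : ℝ) :
    dyadicDigit (y / 2 ^ j) i = dyadicDigit (⌊y⌋ / 2 ^ j) i := by
  simp only [dyadicDigit, floor_two_pow_mul_div_two_pow hij,
    floor_two_pow_mul_div_two_pow ((i.sub_le 1).trans hij), Int.floor_intCast]

lemma dyadicDigit_div_two_pow_add {i : ℕ} (j : ℕ) (hi : 1 ≤ i) (y : ℝ) :
    dyadicDigit (y / 2 ^ j) (i + j) = dyadicDigit y i := by
  have hpow : ∀ r, (2 : ℝ) ^ (r + j) * (y / 2 ^ j) = 2 ^ r * y := fun r => by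
    rw [pow_add]; field_simp
  unfold dyadicDigit
  rw [hpow, show i + j - 1 = i - 1 + j by omega, hpow]

lemma dyadicDigit_add_intCast {i : ℕ} (hi : 1 ≤ i) (y : ℝ) (z : ℤ) :
    dyadicDigit (y + z) i = dyadicDigit y i := by
  have hfloor : ∀ r : ℕ, ⌊(2 : ℝ) ^ r * (y + z)⌋ = ⌊(2 : ℝ) ^ r * y⌋ + 2 ^ r * z := fun r => by
    rw [mul_add, ← Int.floor_add_intCast]; push_cast; rfl
  obtain ⟨i, rfl⟩ := Nat.exists_eq_add_of_le' hi
  simp only [dyadicDigit, hfloor, Nat.add_sub_cancel]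
  ring

lemma dyadicDigit_zero (i : ℕ) : dyadicDigit 0 i = 0 := by
  simp [dyadicDigit]

lemma walsh_eq_neg_one_pow_sum_range {n N : ℕ} (hN : n + 1 ≤ N) (x : ℝ) :
    walsh n x = (-1) ^ ∑ i ∈ range N,
      (natDigit n (i + 1) + natDigit n (i + 2)) * (dyadicDigit x (i + 1)).toNat := by
  rw [walsh, ← Ico_add_one_right_eq_Icc, sum_Ico_eq_sum_range, Nat.add_sub_cancel]
  congr 1
  simp only [add_comm 1, add_assoc, one_add_one_eq_two]
  refine sum_subset (range_subset_range.2 hN) fun i _ hin => ?_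
  rw [mem_range, not_lt] at hin
  rw [natDigit_eq_zero_of_add_two_le (by omega), natDigit_eq_zero_of_add_two_le (by omega),
    add_zero, zero_mul]

lemma dyadicDigit_fract {i : ℕ} (hi : 1 ≤ i) (y : ℝ) :
    dyadicDigit (Int.fract y) i = dyadicDigit y i := by
  rw [← dyadicDigit_add_intCast hi _ ⌊y⌋, Int.fract_add_floor]

theorem walsh_div_two_pow (n j : ℕ) (y : ℝ) :
    walsh n (y / 2 ^ j) = walsh n (⌊y⌋ / 2 ^ j) * walsh (n / 2 ^ j) (Int.fract y) := by
  have hN : n + 1 ≤ j + (n + 1) := by omega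
  have hq : n / 2 ^ j + 1 ≤ n + 1 := by have := Nat.div_le_self n (2 ^ j); omega
  rw [walsh_eq_neg_one_pow_sum_range hN, walsh_eq_neg_one_pow_sum_range hN,
    walsh_eq_neg_one_pow_sum_range hq, ← pow_add, sum_range_add _ j, sum_range_add _ j]
  congr 1
  have hlow : ∀ i ∈ range j,
      dyadicDigit (y / 2 ^ j) (i + 1) = dyadicDigit ((⌊y⌋ : ℝ) / 2 ^ j) (i + 1) := fun i hi => by
    have hij : i + 1 ≤ j := mem_range.1 hi
    rw [dyadicDigit_div_two_pow_of_le hij, dyadicDigit_div_two_pow_of_le hij, Int.floor_intCast]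
  have hhigh : ∀ (x : ℝ) (i : ℕ),
      dyadicDigit (x / 2 ^ j) (j + i + 1) = dyadicDigit (Int.fract x) (i + 1) := fun x i => by
    rw [show j + i + 1 = i + 1 + j by ring, dyadicDigit_div_two_pow_add j (by omega),
      dyadicDigit_fract (by omega)]
  have hdigit : ∀ i k, 1 ≤ k → natDigit n (j + i + k) = natDigit (n / 2 ^ j) (i + k) :=
    fun i k hk => by rw [show j + i + k = i + k + j by ring, natDigit_add n j (by omega)]
  rw [sum_congr rfl fun i hi => by rw [hlow i hi]]
  simp only [hhigh, Int.fract_intCast, dyadicDigit_zero, Int.toNat_zero, mul_zero,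
    sum_const_zero, add_zero, hdigit, Nat.one_le_ofNat, le_refl]

open intervalIntegral

lemma measurable_walsh (n : ℕ) : Measurable (walsh n) := by
  unfold walsh dyadicDigit
  fun_prop

lemma abs_walsh (n : ℕ) (x : ℝ) : |walsh n x| = 1 := by
  rw [walsh, abs_pow, abs_neg, abs_one, one_pow]

lemma intervalIntegrable_comp_mul_sub_mul_walsh {φ : ℝ → ℝ} (hφ : LocallyIntegrable φ)
    {c : ℝ} (hc : c ≠ 0) (d : ℝ) (n : ℕ) (a b : ℝ) :
    IntervalIntegrable (fun x => φ (c * x - d) * walsh n x) volume a b := by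
  have hφab : IntervalIntegrable φ volume (c * a - d) (c * b - d) :=
    (hφ.integrableOn_isCompact isCompact_uIcc).intervalIntegrable
  have hcomp := (hφab.comp_sub_right d).comp_mul_left (c := c)
  simp only [sub_add_cancel, mul_div_cancel_left₀ _ hc] at hcomp
  rw [intervalIntegrable_iff] at hcomp ⊢
  refine hcomp.mul_bdd (c := 1) (measurable_walsh n).aestronglyMeasurable
    (Filter.Eventually.of_forall fun x => (abs_walsh n x).le)

lemma integral_comp_add_mul_eq_zero_of_notMem_Icc {φ : ℝ → ℝ} {ν : ℕ}
    (hsupp : ∀ᵐ x : ℝ, x ∉ Set.Icc (-(ν : ℝ) + 1) (ν : ℝ) → φ x = 0)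
    {l : ℤ} (hl : l ∉ Finset.Icc (-(ν : ℤ) + 1) (ν - 1)) (g : ℝ → ℝ) :
    ∫ t in (0 : ℝ)..1, φ (t + l) * g t = 0 := by
  have hshift : ∀ᵐ t : ℝ, t + l ∉ Set.Icc (-(ν : ℝ) + 1) ν → φ (t + l) = 0 :=
    (measurePreserving_add_right volume (l : ℝ)).quasiMeasurePreserving.ae hsupp
  refine integral_zero_ae ?_
  filter_upwards [hshift, volume.ae_ne 1] with t hφ ht1 ht
  rw [Set.uIoc_of_le zero_le_one] at ht
  have ht1 : t < 1 := lt_of_le_of_ne ht.2 ht1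
  rw [hφ fun hmem => hl ?_, zero_mul]
  have hlo : -(ν : ℤ) < l := by exact_mod_cast (by linarith [hmem.1] : -(ν : ℝ) < l)
  have hhi : l < ν := by exact_mod_cast (by linarith [hmem.2, ht.1] : (l : ℝ) < ν)
  exact Finset.mem_Icc.2 ⟨by omega, by omega⟩

lemma walsh_add_natCast_div_two_pow (n j k : ℕ) {t : ℝ} (ht₀ : 0 ≤ t) (ht₁ : t < 1) :
    walsh n ((t + k) / 2 ^ j) = walsh n (k / 2 ^ j) * walsh (n / 2 ^ j) t := by
  rw [walsh_div_two_pow, Int.floor_add_natCast, Int.floor_eq_zero_iff.2 ⟨ht₀, ht₁⟩,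
    Int.fract_add_natCast, Int.fract_eq_self.2 ⟨ht₀, ht₁⟩, zero_add, Int.cast_natCast]

lemma integral_dyadicInterval_mul_walsh (φ : ℝ → ℝ) (n j k m : ℕ) :
    ∫ x in (k / 2 ^ j : ℝ)..((k + 1) / 2 ^ j), φ (2 ^ j * x - m) * walsh n x =
      (2 ^ j)⁻¹ * (walsh n (k / 2 ^ j) *
        ∫ t in (0 : ℝ)..1, φ (t + ((k : ℝ) - m)) * walsh (n / 2 ^ j) t) := by
  have h2j : (2 : ℝ) ^ j ≠ 0 := by positivity
  set g : ℝ → ℝ := fun t => φ (t + ((k : ℝ) - m)) * walsh n ((t + k) / 2 ^ j) with hg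
  have hsub : ∀ x : ℝ, φ (2 ^ j * x - m) * walsh n x = g (2 ^ j * x - k) := fun x => by
    simp only [hg, sub_add_sub_cancel, sub_add_cancel, mul_div_cancel_left₀ _ h2j]
  simp only [hsub]
  rw [integral_comp_mul_sub _ h2j, mul_div_cancel₀ _ h2j, sub_self, mul_div_cancel₀ _ h2j,
    add_sub_cancel_left, smul_eq_mul]
  congr 1
  rw [← intervalIntegral.integral_const_mul]
  refine integral_congr_Ioo_of_le zero_le_one fun t ht => ?_
  simp only [hg, walsh_add_natCast_div_two_pow n j k ht.1.le ht.2]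
  ring

lemma sum_range_sub_eq_sum_Icc {β : Type*} [AddCommMonoid β] {M m ν : ℕ} (hm : ν ≤ m + 1)
    (hmM : m + ν ≤ M) {F : ℤ → β} (hF : ∀ l ∉ Icc (-(ν : ℤ) + 1) (ν - 1), F l = 0) :
    ∑ k ∈ range M, F (k - m) = ∑ l ∈ Icc (-(ν : ℤ) + 1) (ν - 1), F l := by
  have hinj : Set.InjOn (fun k : ℕ => (k : ℤ) - m) (range M) := fun a _ b _ h => by
    simpa using h
  rw [← sum_image hinj]
  refine (sum_subset (fun l hl => ?_) fun l _ hl => hF l hl).symm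
  rw [mem_Icc] at hl
  exact mem_image.2 ⟨(l + m).toNat, mem_range.2 (by omega), by omega⟩

theorem integral_comp_mul_sub_mul_walsh {φ : ℝ → ℝ} {ν : ℕ} (hφ : LocallyIntegrable φ)
    (hsupp : ∀ᵐ x : ℝ, x ∉ Set.Icc (-(ν : ℝ) + 1) (ν : ℝ) → φ x = 0)
    {j m : ℕ} (hm : ν ≤ m + 1) (hmM : m + ν ≤ 2 ^ j) (n : ℕ) :
    ∫ x in (0 : ℝ)..1, φ (2 ^ j * x - m) * walsh n x =
      (2 ^ j)⁻¹ * ∑ l ∈ Icc (-(ν : ℤ) + 1) (ν - 1),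
        (∫ x in (0 : ℝ)..1, φ (x + l) * walsh (n / 2 ^ j) x) * walsh n ((l + m) / 2 ^ j) := by
  have h2j : (2 : ℝ) ^ j ≠ 0 := by positivity
  have hpieces := sum_integral_adjacent_intervals (a := fun k : ℕ => (k : ℝ) / 2 ^ j)
    (n := 2 ^ j) fun k _ => intervalIntegrable_comp_mul_sub_mul_walsh hφ h2j m n _ _
  simp only [Nat.cast_zero, zero_div, Nat.cast_pow, Nat.cast_ofNat, div_self h2j, Nat.cast_succ,
    integral_dyadicInterval_mul_walsh] at hpieces
  rw [← hpieces, ← mul_sum]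
  congr 1
  rw [← sum_range_sub_eq_sum_Icc hm hmM fun l hl => by
    rw [integral_comp_add_mul_eq_zero_of_notMem_Icc hsupp hl, zero_mul]]
  refine sum_congr rfl fun k _ => ?_
  push_cast
  rw [sub_add_cancel, mul_comm]

theorem forward_interior_split_general (ν : ℕ) (φ : ℝ → ℝ)
    (hL2 : MemLp φ 2 volume)
    (hsupp : ∀ᵐ x : ℝ, x ∉ Set.Icc (-(ν : ℝ) + 1) (ν : ℝ) → φ x = 0)
    (j M : ℕ) (hM : M = 2 ^ j) (ξ : ℕ → ℂ) (n : ℕ) :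
    ∑ m ∈ Finset.Icc ν (M - ν - 1),
        ((∫ x in (0 : ℝ)..1,
            ((2 : ℝ) ^ ((j : ℝ) / 2) * φ (2 ^ j * x - m)) * walsh n x : ℝ) : ℂ) * ξ m =
      (((2 : ℝ) ^ (-(j : ℝ) / 2) : ℝ) : ℂ) *
        ∑ l ∈ Finset.Icc (-(ν : ℤ) + 1) ((ν : ℤ) - 1),
          ((∫ x in (0 : ℝ)..1, φ (x + l) * walsh (n / 2 ^ j) x : ℝ) : ℂ) *
            ∑ m ∈ Finset.Icc ν (M - ν - 1),
              ((walsh n (((l : ℝ) + m) / 2 ^ j) : ℝ) : ℂ) * ξ m := by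
  subst hM
  have hφ : LocallyIntegrable φ := hL2.locallyIntegrable one_le_two
  have hscale : (2 : ℝ) ^ ((j : ℝ) / 2) * ((2 : ℝ) ^ j)⁻¹ = 2 ^ (-(j : ℝ) / 2) := by
    rw [← Real.rpow_natCast, ← Real.rpow_neg zero_le_two, ← Real.rpow_add zero_lt_two]
    ring_nf
  simp_rw [mul_sum]
  rw [sum_comm]
  refine sum_congr rfl fun m hm => ?_
  obtain ⟨hνm, hm⟩ := mem_Icc.1 hm
  have hmM : m + ν ≤ 2 ^ j := by
    have := j.one_le_two_pow
    omega
  simp_rw [mul_assoc ((2 : ℝ) ^ ((j : ℝ) / 2))]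
  rw [intervalIntegral.integral_const_mul,
    integral_comp_mul_sub_mul_walsh hφ hsupp (by omega) hmM, ← mul_assoc, hscale]
  push_cast
  rw [mul_sum, sum_mul]
  exact sum_congr rfl fun l _ => by ring

/-- Splitting of the interior forward sums: for `ν ≥ 2`,
`φ ∈ L²(ℝ)` supported in `[−ν+1, ν]`, `M = 2^j ≥ 2ν` and `ξ ∈ ℂ^M`,
`Σ_{m=ν}^{M−ν−1} ⟨φ_{j,m}, w_n⟩ ξ_m
  = 2^{−j/2} Σ_{l=−ν+1}^{ν−1} ⟨φ(·+l), w_{⌊n/2^j⌋}⟩ · Σ_{m=ν}^{M−ν−1} w_n((l+m)/2^j) ξ_m`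
for every `n ∈ ℕ`. -/
theorem forward_interior_split (ν : ℕ) (hν : 2 ≤ ν) (φ : ℝ → ℝ)
    (hL2 : MemLp φ 2 volume)
    (hsupp : ∀ᵐ x : ℝ, x ∉ Set.Icc (-(ν : ℝ) + 1) (ν : ℝ) → φ x = 0)
    (j M : ℕ) (hM : M = 2 ^ j) (hj : 2 * ν ≤ M) (ξ : ℕ → ℂ) (n : ℕ) :
    ∑ m ∈ Finset.Icc ν (M - ν - 1),
        ((∫ x in (0 : ℝ)..1,
            ((2 : ℝ) ^ ((j : ℝ) / 2) * φ (2 ^ j * x - m)) * walsh n x : ℝ) : ℂ) * ξ m =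
      (((2 : ℝ) ^ (-(j : ℝ) / 2) : ℝ) : ℂ) *
        ∑ l ∈ Finset.Icc (-(ν : ℤ) + 1) ((ν : ℤ) - 1),
          ((∫ x in (0 : ℝ)..1, φ (x + l) * walsh (n / 2 ^ j) x : ℝ) : ℂ) *
            ∑ m ∈ Finset.Icc ν (M - ν - 1),
              ((walsh n (((l : ℝ) + m) / 2 ^ j) : ℝ) : ℂ) * ξ m :=
  forward_interior_split_general ν φ hL2 hsupp j M hM ξ n
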